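/- Let r ∈ ℝ with r ≠ 0. There is a 5-dimensional real Lie algebra 𝔤 with basis e₁,...,e₅ and dual basis e¹,...,e⁵ whose Chevalley–Eilenberg differentials satisfy (writing e^{ij} for eⁱ∧eʲ): de¹ = 0, de² = r e^{12} + 3r e^{34} + 3r² e^{35}, de³ = r e^{13} − 3r e^{24} − 3r² e^{25}, de⁴ = 2r e^{14} + 2r e^{23}, de⁵ = −2e^{14} − 2e^{23} (i.e., the bracket determined by these equations satisfies the Jacobi identity). Moreover, 𝔤 is solvable, the quadruplet η = e⁵, ω₁ = e^{12} + e^{34}, ω₂ = e^{13} − e^{24}, ω₃ = e^{14} + e^{23} is a hypo-contact structure on 𝔤, and 𝔤 is isomorphic to 𝔥₃. -/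

import Mathlib

noncomputable section

/-- Chevalley–Eilenberg differential of a 1-form on a Lie algebra. -/
def dOne {V : Type*} [LieRing V] [LieAlgebra ℝ V] (α : V → ℝ) (x y : V) : ℝ :=
  -α ⁅x, y⁆

/-- Chevalley–Eilenberg differential of a 2-form on a Lie algebra. -/
def dTwo {V : Type*} [LieRing V] [LieAlgebra ℝ V] (ω : V → V → ℝ) (x y z : V) : ℝ :=
  -ω ⁅x, y⁆ z + ω ⁅x, z⁆ y - ω ⁅y, z⁆ x

/-- Chevalley–Eilenberg differential of a 3-form on a Lie algebra. -/
def dThree {V : Type*} [LieRing V] [LieAlgebra ℝ V] (σ : V → V → V → ℝ)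
    (x y z w : V) : ℝ :=
  -σ ⁅x, y⁆ z w + σ ⁅x, z⁆ y w - σ ⁅x, w⁆ y z
    - σ ⁅y, z⁆ x w + σ ⁅y, w⁆ x z - σ ⁅z, w⁆ x y

/-- Wedge product of two 1-forms, as an alternating bilinear map. -/
def wedge1 {V : Type*} [LieRing V] [LieAlgebra ℝ V] (α β : V →ₗ[ℝ] ℝ) :
    V →ₗ[ℝ] V →ₗ[ℝ] ℝ :=
  LinearMap.mk₂ ℝ (fun x y => α x * β y - α y * β x)
    (fun m₁ m₂ n => by simp [map_add]; ring)
    (fun c m n => by simp [map_smul, smul_eq_mul]; ring)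
    (fun m n₁ n₂ => by simp [map_add]; ring)
    (fun c m n => by simp [map_smul, smul_eq_mul]; ring)

/-- Wedge product of a 1-form and a 2-form. -/
def wedge12 {V : Type*} (α : V → ℝ) (ω : V → V → ℝ) (x y z : V) : ℝ :=
  α x * ω y z - α y * ω x z + α z * ω x y

/-- Wedge product of two 2-forms. -/
def wedge22 {V : Type*} (ω τ : V → V → ℝ) (x y z w : V) : ℝ :=
  ω x y * τ z w - ω x z * τ y w + ω x w * τ y z
    + ω y z * τ x w - ω y w * τ x z + ω z w * τ x y

/-- Wedge product of a 4-form and a 1-form. -/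
def wedge41 {V : Type*} (v : V → V → V → V → ℝ) (α : V → ℝ)
    (x₀ x₁ x₂ x₃ x₄ : V) : ℝ :=
  α x₀ * v x₁ x₂ x₃ x₄ - α x₁ * v x₀ x₂ x₃ x₄ + α x₂ * v x₀ x₁ x₃ x₄
    - α x₃ * v x₀ x₁ x₂ x₄ + α x₄ * v x₀ x₁ x₂ x₃

/-- An SU(2)-structure on a 5-dimensional real Lie algebra. -/
structure IsSU2Structure {V : Type*} [LieRing V] [LieAlgebra ℝ V]
    (η : V →ₗ[ℝ] ℝ) (ω₁ ω₂ ω₃ : V →ₗ[ℝ] V →ₗ[ℝ] ℝ) : Prop where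
  alt1 : ∀ x, ω₁ x x = 0
  alt2 : ∀ x, ω₂ x x = 0
  alt3 : ∀ x, ω₃ x x = 0
  vol : ∃ v : V → V → V → V → ℝ,
    wedge22 (fun a b => ω₁ a b) (fun a b => ω₁ a b) = v ∧
    wedge22 (fun a b => ω₂ a b) (fun a b => ω₂ a b) = v ∧
    wedge22 (fun a b => ω₃ a b) (fun a b => ω₃ a b) = v ∧
    wedge22 (fun a b => ω₁ a b) (fun a b => ω₂ a b) = (fun _ _ _ _ => 0) ∧
    wedge22 (fun a b => ω₁ a b) (fun a b => ω₃ a b) = (fun _ _ _ _ => 0) ∧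
    wedge22 (fun a b => ω₂ a b) (fun a b => ω₃ a b) = (fun _ _ _ _ => 0) ∧
    wedge41 v (fun x => η x) ≠ (fun _ _ _ _ _ => 0)
  compat : ∀ X Y : V, (∀ z, ω₃ X z = ω₁ Y z) → 0 ≤ ω₂ X Y

/-- A hypo-contact structure on a 5-dimensional real Lie algebra. -/
structure IsHypoContact {V : Type*} [LieRing V] [LieAlgebra ℝ V]
    (η : V →ₗ[ℝ] ℝ) (ω₁ ω₂ ω₃ : V →ₗ[ℝ] V →ₗ[ℝ] ℝ)
    extends IsSU2Structure η ω₁ ω₂ ω₃ : Prop where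
  contact : ∀ x y, dOne (fun z => η z) x y = -2 * ω₃ x y
  closed1 : ∀ x y z w, dThree (wedge12 (fun z => η z) (fun a b => ω₁ a b)) x y z w = 0
  closed2 : ∀ x y z w, dThree (wedge12 (fun z => η z) (fun a b => ω₂ a b)) x y z w = 0

/-- The Lie algebra `𝔥₁`. -/
def IsH1 (V : Type*) [LieRing V] [LieAlgebra ℝ V] : Prop :=
  ∃ X : Module.Basis (Fin 5) ℝ V,
    ⁅X 0, X 1⁆ = 0 ∧ ⁅X 0, X 2⁆ = 0 ∧ ⁅X 0, X 3⁆ = X 4 ∧ ⁅X 0, X 4⁆ = 0 ∧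
    ⁅X 1, X 2⁆ = X 4 ∧ ⁅X 1, X 3⁆ = 0 ∧ ⁅X 1, X 4⁆ = 0 ∧
    ⁅X 2, X 3⁆ = 0 ∧ ⁅X 2, X 4⁆ = 0 ∧ ⁅X 3, X 4⁆ = 0

/-- The Lie algebra `𝔥₂`. -/
def IsH2 (V : Type*) [LieRing V] [LieAlgebra ℝ V] : Prop :=
  ∃ X : Module.Basis (Fin 5) ℝ V,
    ⁅X 0, X 1⁆ = 0 ∧ ⁅X 0, X 2⁆ = 0 ∧ ⁅X 0, X 3⁆ = 0 ∧ ⁅X 0, X 4⁆ = (2 : ℝ) • X 0 ∧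
    ⁅X 1, X 2⁆ = X 0 ∧ ⁅X 1, X 3⁆ = 0 ∧ ⁅X 1, X 4⁆ = X 1 ∧
    ⁅X 2, X 3⁆ = 0 ∧ ⁅X 2, X 4⁆ = X 2 ∧ ⁅X 3, X 4⁆ = (-3 : ℝ) • X 3

/-- The Lie algebra `𝔥₃`. -/
def IsH3 (V : Type*) [LieRing V] [LieAlgebra ℝ V] : Prop :=
  ∃ X : Module.Basis (Fin 5) ℝ V,
    ⁅X 0, X 1⁆ = 0 ∧ ⁅X 0, X 2⁆ = 0 ∧ ⁅X 0, X 3⁆ = (2 : ℝ) • X 0 ∧ ⁅X 0, X 4⁆ = 0 ∧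
    ⁅X 1, X 2⁆ = X 0 ∧ ⁅X 1, X 3⁆ = X 1 ∧ ⁅X 1, X 4⁆ = -X 2 ∧
    ⁅X 2, X 3⁆ = X 2 ∧ ⁅X 2, X 4⁆ = X 1 ∧ ⁅X 3, X 4⁆ = 0

/-- The Lie algebra `𝔥₄`. -/
def IsH4 (V : Type*) [LieRing V] [LieAlgebra ℝ V] : Prop :=
  ∃ X : Module.Basis (Fin 5) ℝ V,
    ⁅X 0, X 1⁆ = 0 ∧ ⁅X 0, X 2⁆ = 0 ∧ ⁅X 0, X 3⁆ = X 0 ∧ ⁅X 0, X 4⁆ = 0 ∧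
    ⁅X 1, X 2⁆ = 0 ∧ ⁅X 1, X 3⁆ = 0 ∧ ⁅X 1, X 4⁆ = X 1 ∧
    ⁅X 2, X 3⁆ = -X 2 ∧ ⁅X 2, X 4⁆ = -X 2 ∧ ⁅X 3, X 4⁆ = 0

/-- The Lie algebra `𝔥₅`. -/
def IsH5 (V : Type*) [LieRing V] [LieAlgebra ℝ V] : Prop :=
  ∃ X : Module.Basis (Fin 5) ℝ V,
    ⁅X 0, X 1⁆ = 0 ∧ ⁅X 0, X 2⁆ = 0 ∧ ⁅X 0, X 3⁆ = 0 ∧ ⁅X 0, X 4⁆ = X 0 ∧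
    ⁅X 1, X 2⁆ = 0 ∧ ⁅X 1, X 3⁆ = X 0 ∧ ⁅X 1, X 4⁆ = 0 ∧
    ⁅X 2, X 3⁆ = X 1 ∧ ⁅X 2, X 4⁆ = -X 2 ∧ ⁅X 3, X 4⁆ = X 3

/-- `e^{ij}`, the wedge of the `i`-th and `j`-th dual basis 1-forms. -/
def bw {V : Type*} [LieRing V] [LieAlgebra ℝ V] (e : Module.Basis (Fin 5) ℝ V) (i j : Fin 5) :
    V →ₗ[ℝ] V →ₗ[ℝ] ℝ :=
  wedge1 (e.coord i) (e.coord j)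

/-- The content of Statement 4: structure equations, solvability, hypo-contact structure
and the isomorphism type, for a Lie algebra `V`. -/
def GoodLieAlgebra4 (r : ℝ) (V : Type) [LieRing V] [LieAlgebra ℝ V] : Prop :=
  LieAlgebra.IsSolvable V ∧
  ∃ e : Module.Basis (Fin 5) ℝ V,
      (∀ x y : _, dOne (⇑(e.coord 0)) x y = 0) ∧
      (∀ x y : _, dOne (⇑(e.coord 1)) x y = (r) * bw e 0 1 x y + (3*r) * bw e 2 3 x y + (3*r^2) * bw e 2 4 x y) ∧
      (∀ x y : _, dOne (⇑(e.coord 2)) x y = (r) * bw e 0 2 x y + (-3*r) * bw e 1 3 x y + (-3*r^2) * bw e 1 4 x y) ∧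
      (∀ x y : _, dOne (⇑(e.coord 3)) x y = (2*r) * bw e 0 3 x y + (2*r) * bw e 1 2 x y) ∧
      (∀ x y : _, dOne (⇑(e.coord 4)) x y = (-2) * bw e 0 3 x y + (-2) * bw e 1 2 x y) ∧
      IsHypoContact (e.coord 4) (bw e 0 1 + bw e 2 3) (bw e 0 2 - bw e 1 3) (bw e 0 3 + bw e 1 2) ∧
      IsH3 V


/-! Realise `𝔤` on `ℝ⁵` with `⁅x, y⁆ⁱ = -deⁱ(x, y)` (indices from `0`, as in `Fin 5`): the
structure equations then hold by construction, while the Jacobi identity and the hypo-contact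
equations are polynomial identities in the coordinates; the SU(2)-conditions involve no bracket
and hold for the standard forms of any basis. The derived series lies in the chain
`𝔤 ⊇ {x₀ = 0, x₃ + r x₄ = 0} ⊇ {x₀ = x₁ = x₂ = 0, x₃ + r x₄ = 0} ⊇ 0`, since each term contains
the brackets of the previous one. For `r ≠ 0` the basis
`-2r e₃ + 2e₄, e₁, e₂, e₀ / r, -e₄ / (3r²)` has the brackets of `𝔥₃`. -/

theorem bw_apply {V : Type*} [LieRing V] [LieAlgebra ℝ V] (e : Module.Basis (Fin 5) ℝ V)
    (i j : Fin 5) (x y : V) :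
    bw e i j x y = e.coord i x * e.coord j y - e.coord i y * e.coord j x :=
  rfl

theorem isSU2Structure_of_basis {V : Type*} [LieRing V] [LieAlgebra ℝ V]
    (e : Module.Basis (Fin 5) ℝ V) :
    IsSU2Structure (e.coord 4) (bw e 0 1 + bw e 2 3) (bw e 0 2 - bw e 1 3)
      (bw e 0 3 + bw e 1 2) where
  alt1 x := by simp [bw_apply]
  alt2 x := by simp [bw_apply]
  alt3 x := by simp [bw_apply]
  vol := by
    refine ⟨_, rfl, ?_, ?_, ?_, ?_, ?_, ?_⟩
    iterate 5
      funext x y z w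
      simp only [wedge22, LinearMap.add_apply, LinearMap.sub_apply, bw_apply]
      ring
    intro h
    have := congrFun (congrFun (congrFun (congrFun (congrFun h (e 4)) (e 0)) (e 1)) (e 2)) (e 3)
    simp [wedge41, wedge22, bw_apply] at this
  compat X Y h := by
    have h0 := h (e 0)
    have h1 := h (e 1)
    have h2 := h (e 2)
    have h3 := h (e 3)
    simp [bw_apply] at h0 h1 h2 h3
    set y := e.repr Y
    calc (0 : ℝ) ≤ y 0 ^ 2 + y 1 ^ 2 + y 2 ^ 2 + y 3 ^ 2 := by positivity
      _ = (bw e 0 2 - bw e 1 3) X Y := by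
        simp only [LinearMap.sub_apply, bw_apply, Module.Basis.coord_apply]
        linear_combination (-y 2) * h3 - y 0 * h1 + y 3 * h2 - y 1 * h0

theorem LieAlgebra.derivedSeries_succ_subset {R L : Type*} [CommRing R] [LieRing L]
    [LieAlgebra R L] {k : ℕ} {S T : Submodule R L}
    (hk : (derivedSeries R L k : Set L) ⊆ S) (hST : ∀ x ∈ S, ∀ y ∈ S, ⁅x, y⁆ ∈ T) :
    (derivedSeries R L (k + 1) : Set L) ⊆ T := by
  intro x hx
  rw [SetLike.mem_coe, derivedSeries_def, derivedSeriesOfIdeal_succ, ← derivedSeries_def,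
    ← LieSubmodule.mem_toSubmodule, LieSubmodule.lieIdeal_oper_eq_linear_span'] at hx
  refine Submodule.span_le.mpr ?_ hx
  rintro _ ⟨a, ha, b, hb, rfl⟩
  exact hST a (hk ha) b (hk hb)

/-- A type synonym, because `Fin 5 → ℝ` itself already carries the componentwise (abelian) Lie
bracket. -/
def HypoAlg (_r : ℝ) : Type := Fin 5 → ℝ

namespace HypoAlg

variable {r : ℝ}

instance : AddCommGroup (HypoAlg r) := inferInstanceAs (AddCommGroup (Fin 5 → ℝ))
instance : Module ℝ (HypoAlg r) := inferInstanceAs (Module ℝ (Fin 5 → ℝ))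

@[simp] theorem add_apply (x y : HypoAlg r) (i : Fin 5) : (x + y) i = x i + y i := rfl
@[simp] theorem smul_apply (c : ℝ) (x : HypoAlg r) (i : Fin 5) : (c • x) i = c * x i := rfl
@[simp] theorem neg_apply (x : HypoAlg r) (i : Fin 5) : (-x) i = -x i := rfl
@[simp] theorem zero_apply (i : Fin 5) : (0 : HypoAlg r) i = 0 := rfl

@[ext] theorem ext {x y : HypoAlg r} (h : ∀ i, x i = y i) : x = y := funext h

def bracket (r : ℝ) (x y : HypoAlg r) : HypoAlg r :=
  ![0,
    -(r * (x 0 * y 1 - x 1 * y 0) + 3 * r * (x 2 * y 3 - x 3 * y 2)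
      + 3 * r ^ 2 * (x 2 * y 4 - x 4 * y 2)),
    -(r * (x 0 * y 2 - x 2 * y 0) - 3 * r * (x 1 * y 3 - x 3 * y 1)
      - 3 * r ^ 2 * (x 1 * y 4 - x 4 * y 1)),
    -(2 * r * (x 0 * y 3 - x 3 * y 0) + 2 * r * (x 1 * y 2 - x 2 * y 1)),
    2 * (x 0 * y 3 - x 3 * y 0) + 2 * (x 1 * y 2 - x 2 * y 1)]

instance : LieRing (HypoAlg r) where
  bracket := bracket r
  add_lie x y z := by ext i; rw [add_apply]; fin_cases i <;> simp [bracket] <;> ring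
  lie_add x y z := by ext i; rw [add_apply]; fin_cases i <;> simp [bracket] <;> ring
  lie_self x := by ext i; fin_cases i <;> simp [bracket] <;> ring
  leibniz_lie x y z := by ext i; rw [add_apply]; fin_cases i <;> simp [bracket] <;> ring

theorem lie_def (x y : HypoAlg r) : ⁅x, y⁆ = bracket r x y := rfl

instance : LieAlgebra ℝ (HypoAlg r) where
  lie_smul c x y := by ext i; rw [smul_apply]; fin_cases i <;> simp [lie_def, bracket] <;> ring

def stdBasis (r : ℝ) : Module.Basis (Fin 5) ℝ (HypoAlg r) := Pi.basisFun ℝ (Fin 5)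

@[simp] theorem stdBasis_repr (x : HypoAlg r) (i : Fin 5) : (stdBasis r).repr x i = x i := rfl

@[simp] theorem stdBasis_coord (i : Fin 5) (x : HypoAlg r) : (stdBasis r).coord i x = x i := rfl

theorem stdBasis_apply (i j : Fin 5) : stdBasis r i j = if j = i then 1 else 0 :=
  (congrFun (Pi.basisFun_apply ℝ (Fin 5) i) j).trans (Pi.single_apply i 1 j)

theorem isHypoContact : IsHypoContact ((stdBasis r).coord 4)
    (bw (stdBasis r) 0 1 + bw (stdBasis r) 2 3) (bw (stdBasis r) 0 2 - bw (stdBasis r) 1 3)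
    (bw (stdBasis r) 0 3 + bw (stdBasis r) 1 2) where
  toIsSU2Structure := isSU2Structure_of_basis _
  contact x y := by
    simp only [dOne, LinearMap.add_apply, bw_apply, stdBasis_coord]
    simp [lie_def, bracket]; ring
  closed1 x y z w := by
    simp only [dThree, wedge12, LinearMap.add_apply, bw_apply, stdBasis_coord]
    simp [lie_def, bracket]; ring
  closed2 x y z w := by
    simp only [dThree, wedge12, LinearMap.sub_apply, bw_apply, stdBasis_coord]
    simp [lie_def, bracket]; ring

def firstDerived (r : ℝ) : Submodule ℝ (HypoAlg r) :=
  LinearMap.ker ((stdBasis r).coord 0) ⊓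
    LinearMap.ker ((stdBasis r).coord 3 + r • (stdBasis r).coord 4)

def secondDerived (r : ℝ) : Submodule ℝ (HypoAlg r) :=
  firstDerived r ⊓ LinearMap.ker ((stdBasis r).coord 1) ⊓ LinearMap.ker ((stdBasis r).coord 2)

theorem mem_firstDerived {x : HypoAlg r} :
    x ∈ firstDerived r ↔ x 0 = 0 ∧ x 3 + r * x 4 = 0 := by
  simp [firstDerived]

theorem mem_secondDerived {x : HypoAlg r} :
    x ∈ secondDerived r ↔ (x 0 = 0 ∧ x 3 + r * x 4 = 0) ∧ x 1 = 0 ∧ x 2 = 0 := by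
  simp [secondDerived, mem_firstDerived, and_assoc]

theorem lie_mem_firstDerived (x y : HypoAlg r) : ⁅x, y⁆ ∈ firstDerived r := by
  exact mem_firstDerived.mpr ⟨rfl, by simp [lie_def, bracket]; ring⟩

theorem lie_mem_secondDerived {x y : HypoAlg r} (hx : x ∈ firstDerived r)
    (hy : y ∈ firstDerived r) : ⁅x, y⁆ ∈ secondDerived r := by
  obtain ⟨hx0, hx3⟩ := mem_firstDerived.mp hx
  obtain ⟨hy0, hy3⟩ := mem_firstDerived.mp hy
  refine mem_secondDerived.mpr ⟨mem_firstDerived.mp (lie_mem_firstDerived x y), ?_, ?_⟩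
  · simp [lie_def, bracket, hx0, hy0]
    linear_combination (-3 * r * x 2) * hy3 + 3 * r * y 2 * hx3
  · simp [lie_def, bracket, hx0, hy0]
    linear_combination 3 * r * x 1 * hy3 - 3 * r * y 1 * hx3

theorem lie_eq_zero_of_mem_secondDerived {x y : HypoAlg r} (hx : x ∈ secondDerived r)
    (hy : y ∈ secondDerived r) : ⁅x, y⁆ = 0 := by
  obtain ⟨⟨hx0, -⟩, hx1, hx2⟩ := mem_secondDerived.mp hx
  obtain ⟨⟨hy0, -⟩, hy1, hy2⟩ := mem_secondDerived.mp hy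
  ext i; fin_cases i <;> simp [lie_def, bracket, hx0, hx1, hx2, hy0, hy1, hy2]

instance : LieAlgebra.IsSolvable (HypoAlg r) := by
  have h1 : (LieAlgebra.derivedSeries ℝ (HypoAlg r) 1 : Set (HypoAlg r)) ⊆ firstDerived r :=
    LieAlgebra.derivedSeries_succ_subset (fun _ _ => Submodule.mem_top)
      (fun x _ y _ => lie_mem_firstDerived x y)
  have h2 := LieAlgebra.derivedSeries_succ_subset h1 fun _ hx _ hy => lie_mem_secondDerived hx hy
  have h3 := LieAlgebra.derivedSeries_succ_subset (T := ⊥) h2 fun _ hx _ hy => by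
    rw [Submodule.mem_bot]; exact lie_eq_zero_of_mem_secondDerived hx hy
  refine LieAlgebra.IsSolvable.mk (R := ℝ) (k := 3) (eq_bot_iff.mpr fun x hx => ?_)
  simpa using h3 hx

def h3Equiv (hr : r ≠ 0) : HypoAlg r ≃ₗ[ℝ] HypoAlg r where
  toFun x := ![x 3 / r, x 1, x 2, -(2 * r) * x 0, 2 * x 0 - x 4 / (3 * r ^ 2)]
  map_add' x y := by ext i; show _ = (_ : ℝ) + _; fin_cases i <;> simp <;> ring
  map_smul' c x := by ext i; show _ = c * (_ : ℝ); fin_cases i <;> simp <;> ring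
  invFun y := ![-y 3 / (2 * r), y 1, y 2, r * y 0, -(3 * r) * y 3 - 3 * r ^ 2 * y 4]
  left_inv x := by ext i; fin_cases i <;> simp [field]
  right_inv y := by ext i; fin_cases i <;> simp [field]

theorem h3Equiv_apply (hr : r ≠ 0) (x : HypoAlg r) (i : Fin 5) :
    h3Equiv hr x i = ![x 3 / r, x 1, x 2, -(2 * r) * x 0, 2 * x 0 - x 4 / (3 * r ^ 2)] i :=
  rfl

theorem isH3 (hr : r ≠ 0) : IsH3 (HypoAlg r) := by
  refine ⟨(stdBasis r).map (h3Equiv hr), ?_, ?_, ?_, ?_, ?_, ?_, ?_, ?_, ?_, ?_⟩ <;>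
  · ext k
    simp only [Module.Basis.map_apply]
    fin_cases k <;> simp [field, h3Equiv_apply, stdBasis_apply, lie_def, bracket]

end HypoAlg

theorem exists_good_lie_algebra4 (r : ℝ) (hr : r ≠ 0) :
    ∃ (V : Type) (i₁ : LieRing V) (i₂ : @LieAlgebra ℝ V _ i₁),
      @GoodLieAlgebra4 r V i₁ i₂ := by
  refine ⟨HypoAlg r, inferInstance, inferInstance, inferInstance, HypoAlg.stdBasis r,
    fun x y => ?_, fun x y => ?_, fun x y => ?_, fun x y => ?_, fun x y => ?_,
    HypoAlg.isHypoContact, HypoAlg.isH3 hr⟩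
  all_goals
    simp only [dOne, bw_apply, HypoAlg.stdBasis_coord]
    simp [HypoAlg.lie_def, HypoAlg.bracket]
  all_goals ring

end
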